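/- For all positive integers n, k, and r, Q_k(n) = Σ_{i=0}^{r-1} Q_{rk}(n + ik), i.e., the total number of occurrences of the part k among partitions of n equals the sum over i from 0 to r-1 of the number of occurrences of the part rk among partitions of n + ik. -/

import Mathlib

/-- Number of partitions of `n`. -/
def P (n : ℕ) : ℕ := Fintype.card (Nat.Partition n)

/-- Partition function extended to `ℤ`, zero for negative arguments. -/
def PZ (z : ℤ) : ℕ := if z < 0 then 0 else P z.toNat

/-- Total number of occurrences of the part `k` over all partitions of `n`. -/
def Q (k n : ℕ) : ℕ := ∑ p : Nat.Partition n, Multiset.count k p.parts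

/-- `Q` extended to `ℤ`, zero for non-positive arguments. -/
def QZ (k : ℕ) (z : ℤ) : ℕ := if z ≤ 0 then 0 else Q k z.toNat

/-- Sum over all partitions of `n` of the number of distinct part-sizes. -/
def S (n : ℕ) : ℕ := ∑ p : Nat.Partition n, p.parts.toFinset.card

/-- Number of pairs `(λ, m)` with `λ` a partition of `n` and `m` a part-size
occurring at least `k` times in `λ`. -/
def V (k n : ℕ) : ℕ :=
  ∑ p : Nat.Partition n, (p.parts.toFinset.filter (fun m => k ≤ p.parts.count m)).card

/-!
Removing one part `k` shows `Q k n = P (n - k) + Q k (n - k)`, hence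
`Q k n = ∑_{t ≥ 1} P (n - t k)`. Applying this to `Q (r k) (n + i k)` gives the terms
`P (n - (s r - i) k)` with `s ≥ 1`, and as `(s, i)` runs over `ℕ₊ × [0, r)` the index
`s r - i` runs over `ℕ₊` exactly once.
-/

lemma PZ_of_neg {z : ℤ} (hz : z < 0) : PZ z = 0 := if_pos hz

lemma PZ_natCast (m : ℕ) : PZ m = P m := by simp [PZ]

lemma sum_range_mul_eq_sum_sum {M : Type*} [AddCommMonoid M] (f : ℕ → M) (m r : ℕ) :
    ∑ t ∈ Finset.range (m * r), f t = ∑ s ∈ Finset.range m, ∑ j ∈ Finset.range r, f (s * r + j) := by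
  induction m with
  | zero => simp
  | succ m ih => rw [Finset.sum_range_succ, ← ih, Nat.succ_mul, Finset.sum_range_add]

def consPartEquiv {k n : ℕ} (hk : 0 < k) (hkn : k ≤ n) :
    Nat.Partition (n - k) ≃ {p : Nat.Partition n // k ∈ p.parts} where
  toFun q := ⟨⟨k ::ₘ q.parts,
    fun hi => (Multiset.mem_cons.1 hi).elim (· ▸ hk) q.parts_pos,
    by rw [Multiset.sum_cons, q.parts_sum]; omega⟩, Multiset.mem_cons_self _ _⟩
  invFun p := ⟨p.1.parts.erase k, fun hi => p.1.parts_pos (Multiset.mem_of_mem_erase hi), by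
    have h := congrArg Multiset.sum (Multiset.cons_erase p.2)
    rw [Multiset.sum_cons, p.1.parts_sum] at h
    omega⟩
  left_inv q := by ext1; simp
  right_inv p := by ext1; simp [Multiset.cons_erase p.2]

lemma Q_eq_zero_of_lt {k n : ℕ} (hnk : n < k) : Q k n = 0 := by
  refine Finset.sum_eq_zero fun p _ => Multiset.count_eq_zero.2 fun hmem => ?_
  have := Multiset.le_sum_of_mem hmem
  rw [p.parts_sum] at this
  omega

lemma Q_eq_P_add_Q {k n : ℕ} (hk : 0 < k) (hkn : k ≤ n) :
    Q k n = P (n - k) + Q k (n - k) := by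
  classical
  have hrestrict : Q k n = ∑ p : {p : Nat.Partition n // k ∈ p.parts}, p.1.parts.count k := by
    rw [Q, ← Finset.sum_filter_of_ne fun p _ hp => Multiset.count_ne_zero.1 hp]
    exact Finset.sum_subtype _ (by simp) _
  rw [hrestrict, ← (consPartEquiv hk hkn).sum_comp]
  simp [consPartEquiv, Finset.sum_add_distrib, Q, P, add_comm]

lemma Q_eq_sum_PZ {k n T : ℕ} (hk : 0 < k) (hT : n ≤ T) :
    Q k n = ∑ t ∈ Finset.range T, PZ ((n : ℤ) - (t + 1) * k) := by
  induction n using Nat.strong_induction_on generalizing T with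
  | _ n ih =>
    rcases lt_or_ge n k with hnk | hkn
    · rw [Q_eq_zero_of_lt hnk]
      refine (Finset.sum_eq_zero fun t _ => PZ_of_neg ?_).symm
      nlinarith
    obtain ⟨T, rfl⟩ : ∃ T', T = T' + 1 := ⟨T - 1, by omega⟩
    have hsub : ((n - k : ℕ) : ℤ) = n - k := by omega
    rw [Q_eq_P_add_Q hk hkn, ih (n - k) (by omega) (T := T) (by omega), Finset.sum_range_succ',
      add_comm]
    congr 1
    · refine Finset.sum_congr rfl fun t _ => congrArg PZ ?_
      push_cast [hsub]
      ring
    · rw [← PZ_natCast, hsub]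
      push_cast
      ring_nf

theorem stmt_17_general (n k r : ℕ) (hk : 0 < k) (hr : 0 < r) :
    Q k n = ∑ i ∈ Finset.range r, Q (r * k) (n + i * k) := by
  -- Index `t = s * r + (r - 1 - j)` of the left sum is index `s` of `Q (r * k) (n + j * k)`;
  -- `M` is large enough that both truncations lose only zero terms.
  set M := n + r * k
  have hnM : n ≤ M * r := (Nat.le_add_right n _).trans (Nat.le_mul_of_pos_right M hr)
  rw [Q_eq_sum_PZ hk hnM, sum_range_mul_eq_sum_sum, Finset.sum_comm, ← Finset.sum_range_reflect]
  refine Finset.sum_congr rfl fun j hj => ?_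
  have hjr : j < r := Finset.mem_range.1 hj
  rw [Q_eq_sum_PZ (Nat.mul_pos hr hk) (T := M)
    (Nat.add_le_add_left (Nat.mul_le_mul_right k hjr.le) n)]
  refine Finset.sum_congr rfl fun s _ => congrArg PZ ?_
  have hreflect : ((r - 1 - j : ℕ) : ℤ) = r - 1 - j := by omega
  push_cast [hreflect]
  ring

theorem stmt_17 (n k r : ℕ) (hn : 0 < n) (hk : 0 < k) (hr : 0 < r) :
    Q k n = ∑ i ∈ Finset.range r, Q (r * k) (n + i * k) :=
  stmt_17_general n k r hk hr
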